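/- For all positive integers n and k with k ≤ n − 1, the k-synchronous bondage number of the complete graph on n vertices is Sb_k(K_n) = C(n,2) − ⌊(n − k − 1)(n − k + 1)/2⌋, where C(n,2) = n(n−1)/2. -/

import Mathlib

/-- A finite set of vertices `D` is a dominating set of `G` if every vertex
is in `D` or adjacent to a vertex in `D`. -/
def SimpleGraph.IsDominatingSet {V : Type*} (G : SimpleGraph V) (D : Finset V) : Prop :=
  ∀ v : V, v ∈ D ∨ ∃ u ∈ D, G.Adj u v

/-- The domination number of `G`: the minimum cardinality of a dominating set. -/
noncomputable def SimpleGraph.domNum {V : Type*} (G : SimpleGraph V) : ℕ :=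
  sInf {n : ℕ | ∃ D : Finset V, G.IsDominatingSet D ∧ D.card = n}

/-- The `k`-synchronous bondage number of `G`: the minimum cardinality of a set of edges
whose deletion increases the domination number by exactly `k`.  (`Sb 1` is the classical
bondage number.) -/
noncomputable def SimpleGraph.synchBondage {V : Type*} (G : SimpleGraph V) (k : ℕ) : ℕ :=
  sInf {m : ℕ | ∃ E' : Finset (Sym2 V), ↑E' ⊆ G.edgeSet ∧
    (G.deleteEdges ↑E').domNum = G.domNum + k ∧ E'.card = m}

/-!
Deleting a set of edges from `K_n` that raises the domination number to `k + 1` leaves a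
spanning subgraph with domination number `k + 1`, so the question is how many edges such a graph
can keep. Vizing's bound answers it: a graph on `N` vertices with domination number `γ ≥ 2` has
at most `(N - γ)(N - γ + 2) / 2` edges. It is proved by induction on `N`: removing the closed
neighbourhood of a vertex `v` of maximum degree `Δ` lowers the domination number by at most one,
and the edges meeting that neighbourhood number at most `Δ (N - γ + 2) / 2`, because any two
vertices together with the vertices they do not dominate form a dominating set. The bound is
attained by `K_{n-k+1}` minus a minimum edge cover, together with `k - 1` isolated vertices.
-/

open Finset

namespace SimpleGraph

variable {V : Type*}

theorem IsDominatingSet.mem_of_forall_not_adj {G : SimpleGraph V} {D : Finset V}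
    (hD : G.IsDominatingSet D) {v : V} (hv : ∀ u, ¬G.Adj u v) : v ∈ D :=
  (hD v).resolve_right fun ⟨u, _, huv⟩ => hv u huv

variable (G : SimpleGraph V)

theorem domNum_le_card_of_isDominatingSet {D : Finset V} (hD : G.IsDominatingSet D) :
    G.domNum ≤ #D :=
  Nat.sInf_le ⟨D, hD, rfl⟩

theorem degree_induce [DecidableRel G.Adj] (B : Finset V) (x : (B : Set V)) :
    (G.induce (B : Set V)).degree x = #{b ∈ B | G.Adj x b} := by
  rw [← card_neighborFinset_eq_degree, ← card_map (Function.Embedding.subtype _)]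
  congr 1
  ext b
  simp [and_comm]

section Fintype

variable [Fintype V]

theorem isDominatingSet_univ : G.IsDominatingSet univ := fun v => .inl (mem_univ v)

theorem exists_isDominatingSet_card_eq_domNum :
    ∃ D : Finset V, G.IsDominatingSet D ∧ #D = G.domNum :=
  Nat.sInf_mem (s := {n | ∃ D : Finset V, G.IsDominatingSet D ∧ #D = n})
    ⟨_, univ, G.isDominatingSet_univ, rfl⟩

theorem domNum_le_card : G.domNum ≤ Fintype.card V :=
  G.domNum_le_card_of_isDominatingSet G.isDominatingSet_univ

theorem domNum_pos [Nonempty V] : 0 < G.domNum := by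
  obtain ⟨D, hD, hcard⟩ := G.exists_isDominatingSet_card_eq_domNum
  obtain ⟨v⟩ := ‹Nonempty V›
  rw [← hcard, card_pos]
  rcases hD v with hv | ⟨u, hu, -⟩
  · exact ⟨v, hv⟩
  · exact ⟨u, hu⟩

theorem domNum_top [Nonempty V] : (⊤ : SimpleGraph V).domNum = 1 := by
  obtain ⟨v⟩ := ‹Nonempty V›
  have hv : (⊤ : SimpleGraph V).IsDominatingSet {v} := fun w => by
    rcases eq_or_ne w v with rfl | hwv
    exacts [.inl (mem_singleton_self w), .inr ⟨v, mem_singleton_self v, hwv.symm⟩]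
  exact le_antisymm (by simpa using domNum_le_card_of_isDominatingSet _ hv) (domNum_pos _)

variable [DecidableEq V] [DecidableRel G.Adj]

def closedNeighborFinset (v : V) : Finset V := insert v (G.neighborFinset v)

theorem mem_closedNeighborFinset {v w : V} :
    w ∈ G.closedNeighborFinset v ↔ w = v ∨ G.Adj v w := by
  simp [closedNeighborFinset]

theorem card_closedNeighborFinset (v : V) : #(G.closedNeighborFinset v) = G.degree v + 1 := by
  rw [closedNeighborFinset, card_insert_of_notMem (by simp), card_neighborFinset_eq_degree]

theorem isDominatingSet_compl_biUnion_union (S : Finset V) :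
    G.IsDominatingSet ((S.biUnion G.closedNeighborFinset)ᶜ ∪ S) := by
  intro w
  by_cases hw : w ∈ S.biUnion G.closedNeighborFinset
  · obtain ⟨v, hv, hwv⟩ := mem_biUnion.mp hw
    rcases G.mem_closedNeighborFinset.mp hwv with rfl | hadj
    · exact .inl (mem_union_right _ hv)
    · exact .inr ⟨v, mem_union_right _ hv, hadj⟩
  · exact .inl (mem_union_left _ (mem_compl.mpr hw))

theorem domNum_add_card_biUnion_closedNeighborFinset_le (S : Finset V) :
    G.domNum + #(S.biUnion G.closedNeighborFinset) ≤ Fintype.card V + #S := by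
  have hD := G.domNum_le_card_of_isDominatingSet (G.isDominatingSet_compl_biUnion_union S)
  have hunion := card_union_le (S.biUnion G.closedNeighborFinset)ᶜ S
  have := card_le_univ (S.biUnion G.closedNeighborFinset)
  rw [card_compl] at hunion
  omega

theorem domNum_add_degree_le (v : V) : G.domNum + G.degree v ≤ Fintype.card V := by
  have := G.domNum_add_card_biUnion_closedNeighborFinset_le {v}
  rw [singleton_biUnion, card_closedNeighborFinset, card_singleton] at this
  omega

theorem card_filter_adj_compl_closedNeighborFinset_add_le (u v : V) :
    #{b ∈ (G.closedNeighborFinset v)ᶜ | G.Adj u b} + G.degree v + G.domNum ≤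
      Fintype.card V + 1 := by
  have hpair := G.domNum_add_card_biUnion_closedNeighborFinset_le {v, u}
  rw [biUnion_insert, singleton_biUnion] at hpair
  have hsub : (G.closedNeighborFinset v) ∪ {b ∈ (G.closedNeighborFinset v)ᶜ | G.Adj u b} ⊆
      G.closedNeighborFinset v ∪ G.closedNeighborFinset u :=
    union_subset_union_right fun b hb =>
      G.mem_closedNeighborFinset.mpr (.inr (mem_filter.mp hb).2)
  have hdisj :
      Disjoint (G.closedNeighborFinset v) {b ∈ (G.closedNeighborFinset v)ᶜ | G.Adj u b} :=
    disjoint_compl_right.mono_right (filter_subset _ _)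
  have := card_le_card hsub
  rw [card_union_of_disjoint hdisj, card_closedNeighborFinset] at this
  have := card_le_two (a := v) (b := u)
  omega

theorem domNum_le_domNum_induce_compl_closedNeighborFinset_add_one (v : V) :
    G.domNum ≤ (G.induce (↑(G.closedNeighborFinset v)ᶜ : Set V)).domNum + 1 := by
  obtain ⟨D, hD, hcard⟩ :=
    (G.induce (↑(G.closedNeighborFinset v)ᶜ : Set V)).exists_isDominatingSet_card_eq_domNum
  have hdom : G.IsDominatingSet (insert v (D.map (Function.Embedding.subtype _))) := by
    intro w
    by_cases hw : w ∈ G.closedNeighborFinset v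
    · rcases G.mem_closedNeighborFinset.mp hw with rfl | hadj
      · exact .inl (mem_insert_self _ _)
      · exact .inr ⟨v, mem_insert_self _ _, hadj⟩
    · rcases hD ⟨w, by simpa using hw⟩ with hwD | ⟨u, hu, hadj⟩
      · exact .inl (mem_insert_of_mem (mem_map_of_mem _ hwD))
      · exact .inr ⟨u, mem_insert_of_mem (mem_map_of_mem _ hu), hadj⟩
  calc G.domNum ≤ #(insert v (D.map (Function.Embedding.subtype _))) :=
        G.domNum_le_card_of_isDominatingSet hdom
    _ ≤ #D + 1 := by
        rw [← card_map (Function.Embedding.subtype _)]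
        exact card_insert_le _ _
    _ = _ := by rw [hcard]

theorem two_mul_card_edgeFinset_eq_induce_compl_add (A : Finset V) :
    2 * #G.edgeFinset = 2 * #(G.induce (↑Aᶜ : Set V)).edgeFinset +
      ∑ u ∈ A, (G.degree u + #{b ∈ Aᶜ | G.Adj u b}) := by
  have hdeg (w : V) : G.degree w = #{b ∈ Aᶜ | G.Adj w b} + #{b ∈ A | G.Adj w b} := by
    rw [← card_neighborFinset_eq_degree, neighborFinset_eq_filter,
      ← card_union_of_disjoint (disjoint_filter_filter disjoint_compl_left), ← filter_union,
      union_comm, union_compl]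
  have hinner :
      ∑ w ∈ Aᶜ, #{b ∈ Aᶜ | G.Adj w b} = 2 * #(G.induce (↑Aᶜ : Set V)).edgeFinset := by
    rw [← sum_degrees_eq_twice_card_edges, ← sum_coe_sort Aᶜ]
    exact sum_congr rfl fun x _ => (G.degree_induce Aᶜ x).symm
  have hcross :
      ∑ w ∈ Aᶜ, #{b ∈ A | G.Adj w b} = ∑ u ∈ A, #{b ∈ Aᶜ | G.Adj u b} := by
    simp only [card_filter]
    rw [sum_comm]
    simp [G.adj_comm]
  rw [← sum_degrees_eq_twice_card_edges, ← sum_compl_add_sum A,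
    sum_congr rfl fun w _ => hdeg w, sum_add_distrib, hinner, hcross, sum_add_distrib]
  ring

theorem sum_closedNeighborFinset_le {v : V} (hv : ∀ u, G.degree u ≤ G.degree v) :
    ∑ u ∈ G.closedNeighborFinset v,
        (G.degree u + #{b ∈ (G.closedNeighborFinset v)ᶜ | G.Adj u b}) ≤
      G.degree v * (Fintype.card V - G.domNum + 2) := by
  have hv0 : #{b ∈ (G.closedNeighborFinset v)ᶜ | G.Adj v b} = 0 := by
    rw [card_eq_zero, filter_eq_empty_iff]
    exact fun b hb hadj => mem_compl.mp hb (G.mem_closedNeighborFinset.mpr (.inr hadj))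
  have hle (u : V) : G.degree u + #{b ∈ (G.closedNeighborFinset v)ᶜ | G.Adj u b} ≤
      Fintype.card V - G.domNum + 1 := by
    have := G.card_filter_adj_compl_closedNeighborFinset_add_le u v
    have := hv u
    have := G.domNum_le_card
    omega
  have hmem : v ∈ G.closedNeighborFinset v := G.mem_closedNeighborFinset.mpr (.inl rfl)
  rw [← add_sum_erase _ _ hmem, hv0]
  calc G.degree v + 0 + ∑ u ∈ (G.closedNeighborFinset v).erase v,
        (G.degree u + #{b ∈ (G.closedNeighborFinset v)ᶜ | G.Adj u b})
      ≤ G.degree v +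
          ∑ _u ∈ (G.closedNeighborFinset v).erase v, (Fintype.card V - G.domNum + 1) :=
        add_le_add (by rw [add_zero]) (sum_le_sum fun u _ => hle u)
    _ = G.degree v * (Fintype.card V - G.domNum + 2) := by
        rw [sum_const, card_erase_of_mem hmem, card_closedNeighborFinset, Nat.add_sub_cancel,
          smul_eq_mul]
        ring

theorem two_mul_card_edgeFinset_le_of_two_le_domNum (hγ : 2 ≤ G.domNum) :
    2 * #G.edgeFinset ≤ (Fintype.card V - G.domNum) * (Fintype.card V - G.domNum + 2) := by
  induction hN : Fintype.card V using Nat.strong_induction_on generalizing V with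
  | _ N ih =>
  have : Nonempty V := Fintype.card_pos_iff.mp (by have := G.domNum_le_card; omega)
  obtain ⟨v, -, hv⟩ := exists_max_image univ (fun u => G.degree u) univ_nonempty
  replace hv (u : V) : G.degree u ≤ G.degree v := hv u (mem_univ u)
  have hΔ := G.domNum_add_degree_le v
  rw [hN] at hΔ
  obtain hγ2 | hγ3 : G.domNum = 2 ∨ 3 ≤ G.domNum := by omega
  · calc 2 * #G.edgeFinset = ∑ u, G.degree u := G.sum_degrees_eq_twice_card_edges.symm
      _ ≤ ∑ _u : V, G.degree v := sum_le_sum fun u _ => hv u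
      _ = N * G.degree v := by rw [sum_const, card_univ, hN, smul_eq_mul]
      _ ≤ (N - G.domNum + 2) * (N - G.domNum) := by gcongr <;> omega
      _ = _ := mul_comm _ _
  · set A := G.closedNeighborFinset v
    set H := G.induce (↑Aᶜ : Set V)
    have hHcard : Fintype.card (↑Aᶜ : Set V) = N - (G.degree v + 1) := by
      rw [← card_compl_add_card A, card_closedNeighborFinset] at hN
      rw [← hN, Nat.add_sub_cancel, ← Fintype.card_coe]
      rfl
    have hHγ : G.domNum ≤ H.domNum + 1 :=
      G.domNum_le_domNum_induce_compl_closedNeighborFinset_add_one v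
    have hHle := H.domNum_le_card
    have ihH := ih _ (by omega) H (by omega) hHcard
    have hsum := G.sum_closedNeighborFinset_le hv
    rw [hN] at hsum
    rw [G.two_mul_card_edgeFinset_eq_induce_compl_add A]
    obtain ⟨d, hd⟩ : ∃ d, N - G.domNum = G.degree v + d :=
      ⟨N - G.domNum - G.degree v, by omega⟩
    have hH : 2 * #H.edgeFinset ≤ d * (d + 2) :=
      ihH.trans (Nat.mul_le_mul (by omega) (by omega))
    rw [hd] at hsum ⊢
    -- `(Δ + d) (Δ + d + 2) - d (d + 2) - Δ (Δ + d + 2) = Δ d`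
    nlinarith

theorem card_edgeFinset_sub_le_card_of_two_le_domNum_deleteEdges {E : Finset (Sym2 V)}
    (hE : ↑E ⊆ G.edgeSet) (hγ : 2 ≤ (G.deleteEdges ↑E).domNum) :
    #G.edgeFinset - (Fintype.card V - (G.deleteEdges ↑E).domNum) *
      (Fintype.card V - (G.deleteEdges ↑E).domNum + 2) / 2 ≤ #E := by
  have hvizing := (G.deleteEdges ↑E).two_mul_card_edgeFinset_le_of_two_le_domNum hγ
  rw [edgeFinset_deleteEdges, card_sdiff_of_subset (by simpa [← coe_subset] using hE)] at hvizing
  omega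

end Fintype

/-- On `{0, …, m - 1}` the pairs `{x, vizingPartner m x}` form a minimum edge cover: the pairs
`{2i, 2i + 1}`, together with `{m - 2, m - 1}` when `m` is odd. -/
def vizingPartner (m x : ℕ) : ℕ :=
  if x = m - 1 then m - 2 else if x % 2 = 0 then x + 1 else x - 1

theorem vizingPartner_lt {m x : ℕ} (hx : x < m) : vizingPartner m x < m := by
  unfold vizingPartner
  split_ifs <;> omega

theorem vizingPartner_ne {m x : ℕ} (hm : 2 ≤ m) : vizingPartner m x ≠ x := by
  unfold vizingPartner
  split_ifs <;> omega

/-- The complete graph on the first `m` vertices minus the edge cover of `vizingPartner`,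
together with `n - m` isolated vertices. -/
def vizingGraph (n m : ℕ) : SimpleGraph (Fin n) where
  Adj a b := a.val ≠ b.val ∧ a.val < m ∧ b.val < m ∧
    vizingPartner m a ≠ b ∧ vizingPartner m b ≠ a
  symm := ⟨fun _ _ ⟨h, ha, hb, hab, hba⟩ => ⟨h.symm, hb, ha, hba, hab⟩⟩
  loopless := ⟨fun _ h => h.1 rfl⟩

variable {n m : ℕ}

theorem vizingGraph_adj {a b : Fin n} :
    (vizingGraph n m).Adj a b ↔ a.val ≠ b.val ∧ a.val < m ∧ b.val < m ∧
      vizingPartner m a ≠ b ∧ vizingPartner m b ≠ a :=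
  Iff.rfl

instance : DecidableRel (vizingGraph n m).Adj := fun _ _ => decidable_of_iff _ vizingGraph_adj.symm

theorem sub_two_le_degree_vizingGraph_add (hmn : m ≤ n) (a : Fin n) (ha : a.val < m) :
    m - 2 ≤ (vizingGraph n m).degree a + if a.val = m - 2 then 1 else 0 := by
  have key (X : Finset (Fin n))
      (hX : ∀ b : Fin n, b.val < m → b ∉ X → (vizingGraph n m).Adj a b) :
      m - #X ≤ (vizingGraph n m).degree a := by
    set L : Finset (Fin n) := {b | b.val < m}
    have hsub : L \ X ⊆ (vizingGraph n m).neighborFinset a := fun b hb => by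
      simp only [L, mem_sdiff, mem_filter, mem_univ, true_and] at hb
      simpa using hX b hb.1 hb.2
    calc m - #X = #L - #X := by rw [Fin.card_filter_val_lt, min_eq_right hmn]
      _ ≤ #(L \ X) := le_card_sdiff _ _
      _ ≤ _ := (card_le_card hsub).trans (card_neighborFinset_eq_degree _ _).le
  have hpa := vizingPartner_lt ha
  split_ifs with h
  · have := key {a, ⟨vizingPartner m a, by omega⟩, ⟨m - 1, by omega⟩} fun b hb hX => by
      simp only [mem_insert, mem_singleton, not_or, Fin.ext_iff] at hX
      rw [vizingGraph_adj]
      unfold vizingPartner at *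
      split_ifs at * <;> omega
    have :=
      card_le_three (a := a) (b := ⟨vizingPartner m a, by omega⟩) (c := ⟨m - 1, by omega⟩)
    omega
  · have := key {a, ⟨vizingPartner m a, by omega⟩} fun b hb hX => by
      simp only [mem_insert, mem_singleton, not_or, Fin.ext_iff] at hX
      rw [vizingGraph_adj]
      unfold vizingPartner at *
      split_ifs at * <;> omega
    have := card_le_two (a := a) (b := ⟨vizingPartner m a, by omega⟩)
    omega

theorem le_card_edgeFinset_vizingGraph (hmn : m ≤ n) :
    (m - 2) * m / 2 ≤ #(vizingGraph n m).edgeFinset := by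
  set L : Finset (Fin n) := {b | b.val < m}
  have hL : #L = m := by rw [Fin.card_filter_val_lt, min_eq_right hmn]
  have hspecial : #{a ∈ L | a.val = m - 2} ≤ 1 :=
    card_le_one.mpr fun a ha b hb => Fin.ext (by simp only [mem_filter] at ha hb; omega)
  have hL_sum : m * (m - 2) ≤ ∑ a ∈ L, (vizingGraph n m).degree a + 1 :=
    calc m * (m - 2) = ∑ _a ∈ L, (m - 2) := by rw [sum_const, hL, smul_eq_mul]
      _ ≤ ∑ a ∈ L, ((vizingGraph n m).degree a + if a.val = m - 2 then 1 else 0) :=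
        sum_le_sum fun a ha => sub_two_le_degree_vizingGraph_add hmn a (by simpa [L] using ha)
      _ ≤ ∑ a ∈ L, (vizingGraph n m).degree a + 1 := by
        rw [sum_add_distrib, sum_boole, Nat.cast_id]
        omega
  have hsum := sum_le_sum_of_subset (f := fun a => (vizingGraph n m).degree a) (subset_univ L)
  rw [sum_degrees_eq_twice_card_edges] at hsum
  rw [mul_comm] at hL_sum
  omega

theorem one_lt_card_filter_lt_of_isDominatingSet_vizingGraph (hm : 2 ≤ m) (hmn : m ≤ n)
    {D : Finset (Fin n)} (hD : (vizingGraph n m).IsDominatingSet D) :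
    1 < #{b ∈ D | b.val < m} := by
  have hdom (x : Fin n) (hx : x.val < m) :
      ∃ u ∈ D, u.val < m ∧ (u = x ∨ (vizingGraph n m).Adj u x) := by
    rcases hD x with hxD | ⟨u, hu, hux⟩
    · exact ⟨x, hxD, hx, .inl rfl⟩
    · exact ⟨u, hu, (vizingGraph_adj.mp hux).2.1, .inr hux⟩
  obtain ⟨u, hu, hum, -⟩ := hdom ⟨0, by omega⟩ (by simp only; omega)
  have hpu := vizingPartner_lt hum
  obtain ⟨w, hw, hwm, hwu⟩ := hdom ⟨vizingPartner m u, by omega⟩ hpu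
  refine one_lt_card.mpr ⟨u, mem_filter.mpr ⟨hu, hum⟩, w, mem_filter.mpr ⟨hw, hwm⟩, ?_⟩
  rintro rfl
  rcases hwu with h | h
  · exact vizingPartner_ne hm (congrArg Fin.val h).symm
  · exact h.2.2.2.1 rfl

theorem domNum_vizingGraph (hm : 2 ≤ m) (hmn : m ≤ n) :
    (vizingGraph n m).domNum = n - m + 2 := by
  set U : Finset (Fin n) := {b | ¬b.val < m}
  have hU : #U = n - m := by
    rw [show U = ({b : Fin n | b.val < m} : Finset (Fin n))ᶜ by ext; simp [U], card_compl,
      Fin.card_filter_val_lt, Fintype.card_fin, min_eq_right hmn]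
  apply le_antisymm
  · have hD :
        (vizingGraph n m).IsDominatingSet ({⟨0, by omega⟩, ⟨1, by omega⟩} ∪ U) := by
      intro w
      by_cases hw : w.val < m
      · by_cases hw01 : w.val = 0 ∨ w.val = 1
        · refine .inl (mem_union_left _ ?_)
          simp only [mem_insert, mem_singleton, Fin.ext_iff]
          omega
        · refine .inr ⟨⟨0, by omega⟩, by simp, ?_⟩
          rw [vizingGraph_adj, Fin.val_mk]
          unfold vizingPartner
          split_ifs <;> omega
      · exact .inl (mem_union_right _ (by simpa [U] using hw))
    calc (vizingGraph n m).domNum ≤ #({⟨0, by omega⟩, ⟨1, by omega⟩} ∪ U) :=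
          domNum_le_card_of_isDominatingSet _ hD
      _ ≤ 2 + #U := (card_union_le _ _).trans (Nat.add_le_add_right card_le_two _)
      _ = n - m + 2 := by omega
  · obtain ⟨D, hD, hcard⟩ := (vizingGraph n m).exists_isDominatingSet_card_eq_domNum
    have hUD : {b ∈ D | ¬b.val < m} = U := by
      ext b
      simp only [mem_filter, mem_univ, true_and, U, and_iff_right_iff_imp]
      exact fun hb => hD.mem_of_forall_not_adj fun u h => hb (vizingGraph_adj.mp h).2.2.1
    have hlow := one_lt_card_filter_lt_of_isDominatingSet_vizingGraph hm hmn hD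
    rw [← hcard, ← card_filter_add_card_filter_not (s := D) (fun b => b.val < m), hUD]
    omega

end SimpleGraph

theorem synchBondage_completeGraph_general (n k : ℕ) (hk : 1 ≤ k) (hkn : k ≤ n - 1) :
    (⊤ : SimpleGraph (Fin n)).synchBondage k =
      n.choose 2 - (n - k - 1) * (n - k + 1) / 2 := by
  have : Nonempty (Fin n) := ⟨⟨0, by omega⟩⟩
  have hK : Finset.card (⊤ : SimpleGraph (Fin n)).edgeFinset = n.choose 2 := by
    rw [SimpleGraph.card_edgeFinset_top_eq_card_choose_two, Fintype.card_fin]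
  have hlower (E : Finset (Sym2 (Fin n))) (hE : ↑E ⊆ (⊤ : SimpleGraph (Fin n)).edgeSet)
      (hγ : ((⊤ : SimpleGraph (Fin n)).deleteEdges ↑E).domNum = 1 + k) :
      n.choose 2 - (n - k - 1) * (n - k + 1) / 2 ≤ E.card := by
    have := SimpleGraph.card_edgeFinset_sub_le_card_of_two_le_domNum_deleteEdges _ hE (by omega)
    rwa [hγ, hK, Fintype.card_fin, show n - (1 + k) = n - k - 1 by omega,
      show n - k - 1 + 2 = n - k + 1 by omega] at this
  set E :=
    (⊤ : SimpleGraph (Fin n)).edgeFinset \ (SimpleGraph.vizingGraph n (n - k + 1)).edgeFinset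
  have hE : ↑E ⊆ (⊤ : SimpleGraph (Fin n)).edgeSet := by simp [E]
  have hγ : ((⊤ : SimpleGraph (Fin n)).deleteEdges ↑E).domNum = 1 + k := by
    rw [Finset.coe_sdiff, SimpleGraph.coe_edgeFinset, SimpleGraph.coe_edgeFinset,
      SimpleGraph.deleteEdges_sdiff_eq_of_le le_top,
      SimpleGraph.domNum_vizingGraph (by omega) (by omega)]
    omega
  have hupper : E.card ≤ n.choose 2 - (n - k - 1) * (n - k + 1) / 2 := by
    have := SimpleGraph.le_card_edgeFinset_vizingGraph (n := n) (m := n - k + 1) (by omega)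
    rw [show n - k + 1 - 2 = n - k - 1 by omega] at this
    rw [Finset.card_sdiff_of_subset (SimpleGraph.edgeFinset_mono le_top), hK]
    omega
  rw [SimpleGraph.synchBondage, SimpleGraph.domNum_top]
  exact IsLeast.csInf_eq ⟨⟨E, hE, hγ, le_antisymm hupper (hlower E hE hγ)⟩,
    fun _ ⟨E', hE', hγ', hcard⟩ => hcard ▸ hlower E' hE' hγ'⟩

/-- for `1 ≤ k ≤ n − 1`, the `k`-synchronous bondage number of the complete
graph `K_n` is `C(n,2) − ⌊(n − k − 1)(n − k + 1)/2⌋`. -/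
theorem synchBondage_completeGraph (n k : ℕ) (hn : 1 ≤ n) (hk : 1 ≤ k) (hkn : k ≤ n - 1) :
    (⊤ : SimpleGraph (Fin n)).synchBondage k =
      n.choose 2 - (n - k - 1) * (n - k + 1) / 2 :=
  synchBondage_completeGraph_general n k hk hkn
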